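/- Let G be a group with subgroups H and N where N is normal, and suppose G = N ⋊ Λ with Λ ≅ ℤ generated by an element σ. Let K be a compact open subgroup of the totally disconnected locally compact group N with σKσ^{-1} ⊆ K and ⋃_{n≥0} σ^{-n} K σ^n = N. Then the image of the modular function Δ_G is the cyclic multiplicative group generated by the index [K : σKσ^{-1}]. -/

import Mathlib

/-!
A modular function is a homomorphism to the commutative group `ℝ>0` that is trivial on the
compact open subgroup `K`, hence trivial on every conjugate `σ⁻ⁿKσⁿ` and so on `N`; therefore
`Δ(nσᵏ) = Δ(σ)ᵏ`. Splitting `K` into cosets of `σKσ⁻¹` gives `μ(K) = [K : σKσ⁻¹] μ(σKσ⁻¹)`,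
while left invariance gives `μ(K) = μ(σK) = μ(σKσ⁻¹ · σ) = Δ(σ) μ(σKσ⁻¹)`, so
`Δ(σ) = [K : σKσ⁻¹]`.
-/

open MeasureTheory

open scoped Pointwise

namespace Subgroup

variable {G : Type*} [Group G]

lemma finiteIndex_subgroupOf_of_isCompact_of_isOpen [TopologicalSpace G] [IsTopologicalGroup G]
    {H K : Subgroup G} (hK : IsCompact (K : Set G)) (hH : IsOpen (H : Set G)) :
    (H.subgroupOf K).FiniteIndex :=
  have : CompactSpace K := isCompact_iff_compactSpace.mp hK
  have := quotient_finite_of_isOpen _ (subgroupOf_isOpen K H hH)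
  finiteIndex_of_finite_quotient

lemma subgroupOf_index_mul_measure [MeasurableSpace G] [MeasurableMul G] {H K : Subgroup G}
    [(H.subgroupOf K).FiniteIndex] (hHK : H ≤ K) (hH : MeasurableSet (H : Set G))
    (hK : MeasurableSet (K : Set G)) (μ : Measure G) [μ.IsMulLeftInvariant] :
    (H.subgroupOf K).index * μ H = μ K := by
  have hemb : MeasurableEmbedding K.subtype := MeasurableEmbedding.subtype_coe hK
  have : MeasurableMul K :=
    ⟨fun c ↦ (measurable_subtype_coe.const_mul (c : G)).subtype_mk,
      fun c ↦ (measurable_subtype_coe.mul_const (c : G)).subtype_mk⟩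
  have := Measure.IsMulLeftInvariant.comap μ hemb
  have key := (H.subgroupOf K).index_mul_measure (hemb.measurable hH) (μ.comap K.subtype)
  rwa [hemb.comap_apply, hemb.comap_apply, coe_subgroupOf, Set.image_univ, coe_subtype,
    Subtype.range_coe, Set.image_preimage_eq_inter_range, Subtype.range_coe,
    Set.inter_eq_left.mpr hHK] at key

end Subgroup

def IsModularFunction {G : Type*} [Group G] [MeasurableSpace G] (μ : Measure G) (Δ : G → ℝ) :
    Prop :=
  ∀ (g : G) (E : Set G), MeasurableSet E → μ ((fun x => x * g) '' E) = ENNReal.ofReal (Δ g) * μ E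

namespace IsModularFunction

/- A single measurable set of finite positive measure already forces `Δ` to be a positive
homomorphism. -/
variable {G : Type*} [Group G] [MeasurableSpace G] {μ : Measure G} {Δ : G → ℝ} {U : Set G}

lemma ofReal_one (hΔ : IsModularFunction μ Δ) (hU : MeasurableSet U) (hU₀ : μ U ≠ 0)
    (hU_top : μ U ≠ ⊤) : ENNReal.ofReal (Δ 1) = 1 := by
  refine (ENNReal.mul_left_inj hU₀ hU_top).mp ?_
  rw [← hΔ _ _ hU, one_mul]
  simp

lemma map_one (hΔ : IsModularFunction μ Δ) (hU : MeasurableSet U) (hU₀ : μ U ≠ 0)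
    (hU_top : μ U ≠ ⊤) : Δ 1 = 1 :=
  ENNReal.ofReal_eq_one.mp (hΔ.ofReal_one hU hU₀ hU_top)

lemma eq_one_of_mem (hΔ : IsModularFunction μ Δ) {K : Subgroup G} (hK : MeasurableSet (K : Set G))
    (hK₀ : μ K ≠ 0) (hK_top : μ K ≠ ⊤) {x : G} (hx : x ∈ K) : Δ x = 1 := by
  have hKx : (fun y => y * x) '' (K : Set G) = K := by
    rw [Set.image_mul_right]
    ext y
    simp [K.mul_mem_cancel_right (K.inv_mem hx)]
  refine ENNReal.ofReal_eq_one.mp ((ENNReal.mul_left_inj hK₀ hK_top).mp ?_)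
  rw [← hΔ _ _ hK, hKx, one_mul]

variable [MeasurableMul G]

lemma ofReal_mul (hΔ : IsModularFunction μ Δ) (hU : MeasurableSet U) (hU₀ : μ U ≠ 0)
    (hU_top : μ U ≠ ⊤) (g h : G) :
    ENNReal.ofReal (Δ (g * h)) = ENNReal.ofReal (Δ g) * ENNReal.ofReal (Δ h) := by
  refine (ENNReal.mul_left_inj hU₀ hU_top).mp ?_
  have hUg : MeasurableSet ((fun x => x * g) '' U) := by
    rw [Set.image_mul_right]
    exact measurable_mul_const _ hU
  rw [← hΔ _ _ hU, mul_comm (ENNReal.ofReal (Δ g)), mul_assoc, ← hΔ _ _ hU, ← hΔ _ _ hUg,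
    Set.image_image]
  simp only [mul_assoc]

lemma pos (hΔ : IsModularFunction μ Δ) (hU : MeasurableSet U) (hU₀ : μ U ≠ 0)
    (hU_top : μ U ≠ ⊤) (g : G) : 0 < Δ g := by
  have h := hΔ.ofReal_mul hU hU₀ hU_top g g⁻¹
  rw [mul_inv_cancel, hΔ.ofReal_one hU hU₀ hU_top] at h
  exact ENNReal.ofReal_pos.mp (left_ne_zero_of_mul_eq_one h.symm).bot_lt

lemma map_mul (hΔ : IsModularFunction μ Δ) (hU : MeasurableSet U) (hU₀ : μ U ≠ 0)
    (hU_top : μ U ≠ ⊤) (g h : G) : Δ (g * h) = Δ g * Δ h := by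
  have hpos := hΔ.pos hU hU₀ hU_top
  rw [← ENNReal.ofReal_eq_ofReal_iff (hpos _).le (mul_pos (hpos g) (hpos h)).le,
    ENNReal.ofReal_mul (hpos g).le, hΔ.ofReal_mul hU hU₀ hU_top]

def toMonoidHom (hΔ : IsModularFunction μ Δ) (hU : MeasurableSet U) (hU₀ : μ U ≠ 0)
    (hU_top : μ U ≠ ⊤) : G →* ℝ where
  toFun := Δ
  map_one' := hΔ.map_one hU hU₀ hU_top
  map_mul' := hΔ.map_mul hU hU₀ hU_top

lemma map_inv (hΔ : IsModularFunction μ Δ) (hU : MeasurableSet U) (hU₀ : μ U ≠ 0)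
    (hU_top : μ U ≠ ⊤) (g : G) : Δ g⁻¹ = (Δ g)⁻¹ :=
  eq_inv_of_mul_eq_one_left <| by
    rw [← hΔ.map_mul hU hU₀ hU_top, inv_mul_cancel, hΔ.map_one hU hU₀ hU_top]

lemma map_zpow (hΔ : IsModularFunction μ Δ) (hU : MeasurableSet U) (hU₀ : μ U ≠ 0)
    (hU_top : μ U ≠ ⊤) (g : G) (k : ℤ) : Δ (g ^ k) = Δ g ^ k :=
  map_zpow' (hΔ.toMonoidHom hU hU₀ hU_top) (hΔ.map_inv hU hU₀ hU_top) g k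

lemma map_conj (hΔ : IsModularFunction μ Δ) (hU : MeasurableSet U) (hU₀ : μ U ≠ 0)
    (hU_top : μ U ≠ ⊤) (g x : G) : Δ (g⁻¹ * x * g) = Δ x := by
  rw [hΔ.map_mul hU hU₀ hU_top, hΔ.map_mul hU hU₀ hU_top, hΔ.map_inv hU hU₀ hU_top,
    mul_right_comm, inv_mul_cancel₀ (hΔ.pos hU hU₀ hU_top g).ne', one_mul]

end IsModularFunction

lemma IsModularFunction.apply_eq_index {G : Type*} [Group G] [TopologicalSpace G]
    [IsTopologicalGroup G] [MeasurableSpace G] [BorelSpace G] {μ : Measure G} [μ.IsHaarMeasure]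
    {Δ : G → ℝ} (hΔ : IsModularFunction μ Δ) {K : Subgroup G} (hK_comp : IsCompact (K : Set G))
    (hK_open : IsOpen (K : Set G)) {σ : G} (hσK : K.map (MulAut.conj σ).toMonoidHom ≤ K) :
    Δ σ = ((K.map (MulAut.conj σ).toMonoidHom).subgroupOf K).index := by
  set H := K.map (MulAut.conj σ).toMonoidHom
  have hH : (H : Set G) = (fun x => σ * x * σ⁻¹) '' K := by
    simp only [H, Subgroup.coe_map, MulEquiv.coe_toMonoidHom]
    rfl
  have hH_open : IsOpen (H : Set G) := by
    rw [hH, ← Set.image_image (· * σ⁻¹) (σ * ·)]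
    exact isOpenMap_mul_right _ _ (isOpenMap_mul_left σ _ hK_open)
  have hH₀ : μ H ≠ 0 := (hH_open.measure_pos μ ⟨1, H.one_mem⟩).ne'
  have hH_top : μ H ≠ ⊤ := (measure_mono hσK |>.trans_lt hK_comp.measure_lt_top).ne
  have := Subgroup.finiteIndex_subgroupOf_of_isCompact_of_isOpen (H := H) hK_comp hH_open
  have hindex := Subgroup.subgroupOf_index_mul_measure hσK hH_open.measurableSet
    hK_open.measurableSet μ
  have hσH : (fun x => x * σ) '' (H : Set G) = σ • (K : Set G) := by
    rw [hH, Set.image_image, ← Set.image_smul]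
    simp
  have hscale := hΔ σ _ hH_open.measurableSet
  rw [hσH, measure_smul, ← hindex] at hscale
  rw [← ENNReal.ofReal_eq_natCast Subgroup.FiniteIndex.index_ne_zero]
  exact ((ENNReal.mul_left_inj hH₀ hH_top).mp hscale).symm

theorem modular_range_eq_cyclic_of_index_general
    {G : Type*} [Group G] [TopologicalSpace G] [IsTopologicalGroup G]
    [MeasurableSpace G] [BorelSpace G]
    (μ : Measure G) [μ.IsHaarMeasure]
    (Δ : G → ℝ)
    (hΔ : ∀ (g : G) (E : Set G), MeasurableSet E →
      μ ((fun x => x * g) '' E) = ENNReal.ofReal (Δ g) * μ E)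
    (N : Subgroup G) (σ : G)
    (hsemi : ∀ g : G, ∃! p : N × ℤ, g = (p.1 : G) * σ ^ p.2)
    (K : Subgroup G)
    (hKcomp : IsCompact (K : Set G)) (hKopen : IsOpen (K : Set G))
    (hσK : Subgroup.map (MulAut.conj σ).toMonoidHom K ≤ K)
    (hcofinal : ∀ x ∈ N, ∃ n : ℕ, σ⁻¹ ^ n * x * σ ^ n ∈ K) :
    Set.range Δ = Set.range (fun k : ℤ =>
      ((((Subgroup.map (MulAut.conj σ).toMonoidHom K).subgroupOf K).index : ℝ)) ^ k) := by
  replace hΔ : IsModularFunction μ Δ := hΔ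
  have hK := hKopen.measurableSet
  have hK₀ : μ K ≠ 0 := (hKopen.measure_pos μ ⟨1, K.one_mem⟩).ne'
  have hK_top : μ K ≠ ⊤ := hKcomp.measure_lt_top.ne
  have hN : ∀ x ∈ N, Δ x = 1 := fun x hx => by
    obtain ⟨n, hn⟩ := hcofinal x hx
    rw [inv_pow] at hn
    rw [← hΔ.map_conj hK hK₀ hK_top (σ ^ n)]
    exact hΔ.eq_one_of_mem hK hK₀ hK_top hn
  have hσ := hΔ.apply_eq_index hKcomp hKopen hσK
  ext r
  constructor
  · rintro ⟨g, rfl⟩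
    obtain ⟨⟨x, k⟩, rfl, -⟩ := hsemi g
    refine ⟨k, ?_⟩
    rw [hΔ.map_mul hK hK₀ hK_top, hN x x.2, one_mul, hΔ.map_zpow hK hK₀ hK_top, hσ]
  · rintro ⟨k, rfl⟩
    exact ⟨σ ^ k, by rw [hΔ.map_zpow hK hK₀ hK_top, hσ]⟩

/-- Let `G = N ⋊ ⟨σ⟩` be a totally disconnected locally compact group, `K ≤ N` a
compact open subgroup with `σKσ⁻¹ ⊆ K` and `⋃ₙ σ⁻ⁿKσⁿ = N`. Then the image of the
modular function `Δ_G` is the cyclic multiplicative group generated by the index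
`[K : σKσ⁻¹]`. -/
theorem modular_range_eq_cyclic_of_index
    {G : Type*} [Group G] [TopologicalSpace G] [IsTopologicalGroup G]
    [LocallyCompactSpace G] [TotallyDisconnectedSpace G]
    [MeasurableSpace G] [BorelSpace G]
    (μ : Measure G) [μ.IsHaarMeasure]
    (Δ : G → ℝ)
    (hΔ : ∀ (g : G) (E : Set G), MeasurableSet E →
      μ ((fun x => x * g) '' E) = ENNReal.ofReal (Δ g) * μ E)
    (N : Subgroup G) (σ : G)
    (hsemi : ∀ g : G, ∃! p : N × ℤ, g = (p.1 : G) * σ ^ p.2)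
    (K : Subgroup G) (hKN : K ≤ N)
    (hKcomp : IsCompact (K : Set G)) (hKopen : IsOpen (K : Set G))
    (hσK : Subgroup.map (MulAut.conj σ).toMonoidHom K ≤ K)
    (hcofinal : ∀ x ∈ N, ∃ n : ℕ, σ⁻¹ ^ n * x * σ ^ n ∈ K) :
    Set.range Δ = Set.range (fun k : ℤ =>
      ((((Subgroup.map (MulAut.conj σ).toMonoidHom K).subgroupOf K).index : ℝ)) ^ k) :=
  modular_range_eq_cyclic_of_index_general μ Δ hΔ N σ hsemi K hKcomp hKopen hσK hcofinal
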